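/- The second Robinson form R₂(x,y,z,w) = x²(x−w)² + y²(y−w)² + z²(z−w)² + 2xyz(x+y+z−2w) does not lie in the Minkowski sum Σ_{4,4} + C_{4,4} of the SOS cone and the SONC cone of quaternary quartics. -/

import Mathlib

/-!
`R₂` vanishes at the seven points `(x, y, z, 1)` with `x, y, z ∈ {0, 1}` and `xyz = 0`, so in
a decomposition `R₂ = ∑ qᵢ² + ∑ hⱼ` into squares of quadratic forms and nonnegative circuit
forms every `qᵢ` and every `hⱼ` vanishes there too. For a quadratic form these zeros kill the
coefficients of `xy` and `yz` (they are mixed second differences), so no `qᵢ²` contains the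
monomial `x²yz`. In a circuit form, `x²yz` has an odd exponent, so it can only be the inner
term. At `(0,1,1,1)`, `(1,0,1,1)`, `(1,1,0,1)` the inner term vanishes and the outer terms are
nonnegative, so every outer term vanishes there as well; hence every (even) outer exponent has
entries at least `2` in `x`, `y` and `z`, which is impossible in degree `4`.
But `x²yz` occurs in `R₂` with coefficient `2`.
-/

open MvPolynomial

/-- Embed an exponent vector into `ℝⁿ`. -/
def expToVec {n : ℕ} (α : Fin n →₀ ℕ) : Fin n → ℝ := fun i => (α i : ℝ)

/-- `h` is a nonnegative circuit form of degree `d` in `n` variables: it is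
homogeneous of degree `d`, nonnegative, its support consists of a set `S` of
affinely independent even exponent vectors with positive coefficients
(the outer terms), possibly together with one additional exponent `β` lying in
the relative interior of the convex hull of `S` (the inner term). -/
def IsNonnegCircuit {n : ℕ} (d : ℕ) (h : MvPolynomial (Fin n) ℝ) : Prop :=
  h.IsHomogeneous d ∧ (∀ x : Fin n → ℝ, 0 ≤ eval x h) ∧
  ∃ S : Finset (Fin n →₀ ℕ),
    (∀ α ∈ S, (∀ i, Even (α i)) ∧ 0 < coeff α h) ∧
    AffineIndependent ℝ (fun a : {α : (Fin n →₀ ℕ) // α ∈ S} => expToVec a.1) ∧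
    ((h.support : Set (Fin n →₀ ℕ)) = ↑S ∨
      ∃ β : Fin n →₀ ℕ, β ∉ S ∧ (h.support : Set (Fin n →₀ ℕ)) = insert β ↑S ∧
        expToVec β ∈ intrinsicInterior ℝ (convexHull ℝ (expToVec '' ↑S)))

/-- `f` is a sum of squares of forms of degree `d` (hence a form of degree `2d`). -/
def IsSOSForm {n : ℕ} (d : ℕ) (f : MvPolynomial (Fin n) ℝ) : Prop :=
  ∃ (k : ℕ) (g : Fin k → MvPolynomial (Fin n) ℝ),
    (∀ i, (g i).IsHomogeneous d) ∧ f = ∑ i, (g i) ^ 2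

/-- `f` is a sum of nonnegative circuit forms of degree `d` (SONC). -/
def IsSONC {n : ℕ} (d : ℕ) (f : MvPolynomial (Fin n) ℝ) : Prop :=
  ∃ (k : ℕ) (h : Fin k → MvPolynomial (Fin n) ℝ),
    (∀ i, IsNonnegCircuit d (h i)) ∧ f = ∑ i, h i

/-- The second Robinson form `R₂(x,y,z,w)`. -/
noncomputable def Robinson2 : MvPolynomial (Fin 4) ℝ :=
  X 0 ^ 2 * (X 0 - X 3) ^ 2 + X 1 ^ 2 * (X 1 - X 3) ^ 2 + X 2 ^ 2 * (X 2 - X 3) ^ 2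
    + 2 * X 0 * X 1 * X 2 * (X 0 + X 1 + X 2 - 2 * X 3)

open Finset

section MixedDifference

variable {σ R : Type*} [Fintype σ] [DecidableEq σ] [CommRing R] {i j : σ}

theorem prod_add_single_add_single_pow (hij : i ≠ j) (v : σ → R) (s t : R) (d : σ →₀ ℕ) :
    ∏ k, (v + Pi.single i s + Pi.single j t : σ → R) k ^ d k =
      (v i + s) ^ d i * (v j + t) ^ d j * ∏ k ∈ (univ.erase i).erase j, v k ^ d k := by
  rw [← mul_prod_erase univ _ (mem_univ i),
    ← mul_prod_erase _ _ (mem_erase.2 ⟨hij.symm, mem_univ j⟩), ← mul_assoc]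
  congr 1
  · simp [hij]
  · refine prod_congr rfl fun k hk => ?_
    obtain ⟨hkj, hki⟩ : k ≠ j ∧ k ≠ i := by simpa using hk
    simp [hki, hkj]

theorem mixedDiff_prod_pow (hij : i ≠ j) (v : σ → R) {d : σ →₀ ℕ} (hd : d.degree ≤ 2) :
    ∏ k, (v + Pi.single i 1 + Pi.single j 1 : σ → R) k ^ d k
      - ∏ k, (v + Pi.single i 1 : σ → R) k ^ d k - ∏ k, (v + Pi.single j 1 : σ → R) k ^ d k
      + ∏ k, v k ^ d k = if d = Finsupp.single i 1 + Finsupp.single j 1 then 1 else 0 := by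
  have h10 := prod_add_single_add_single_pow hij v 1 0 d
  have h01 := prod_add_single_add_single_pow hij v 0 1 d
  have h00 := prod_add_single_add_single_pow hij v 0 0 d
  simp only [Pi.single_zero, add_zero] at h10 h01 h00
  rw [prod_add_single_add_single_pow hij v 1 1 d, h10, h01, h00]
  by_cases hdi : d i = 0
  · have : d ≠ Finsupp.single i 1 + Finsupp.single j 1 := fun h => by simp [h, hij.symm] at hdi
    simp [hdi, this]
  by_cases hdj : d j = 0
  · have : d ≠ Finsupp.single i 1 + Finsupp.single j 1 := fun h => by simp [h, hij] at hdj
    simp [hdj, this]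
  have hdeg : d i + d j + ∑ k ∈ (univ.erase i).erase j, d k = d.degree := by
    rw [Finsupp.degree_eq_sum, ← add_sum_erase univ _ (mem_univ i),
      ← add_sum_erase _ _ (mem_erase.2 ⟨hij.symm, mem_univ j⟩), add_assoc]
  have hrest : ∀ k ∈ (univ.erase i).erase j, d k = 0 := sum_eq_zero_iff.1 (by omega)
  have hd_eq : d = Finsupp.single i 1 + Finsupp.single j 1 := by
    ext k
    by_cases hki : k = i
    · subst hki
      simp only [Finsupp.coe_add, Pi.add_apply, Finsupp.single_eq_same, Finsupp.single_eq_of_ne hij]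
      omega
    by_cases hkj : k = j
    · subst hkj
      simp only [Finsupp.coe_add, Pi.add_apply, Finsupp.single_eq_same, Finsupp.single_eq_of_ne hki]
      omega
    simp [Ne.symm hki, Ne.symm hkj, hrest k (by simp [hki, hkj])]
  rw [if_pos hd_eq, prod_eq_one fun k hk => by rw [hrest k hk, pow_zero],
    show d i = 1 by omega, show d j = 1 by omega]
  ring

theorem MvPolynomial.mixedDiff_eval_eq_coeff {q : MvPolynomial σ R} (hq : q.totalDegree ≤ 2)
    (hij : i ≠ j) (v : σ → R) :
    eval (v + Pi.single i 1 + Pi.single j 1) q - eval (v + Pi.single i 1) q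
      - eval (v + Pi.single j 1) q + eval v q =
      coeff (Finsupp.single i 1 + Finsupp.single j 1) q := by
  simp only [eval_eq', ← sum_sub_distrib, ← sum_add_distrib, ← mul_sub, ← mul_add]
  rw [sum_congr rfl fun d hd => by
    rw [mixedDiff_prod_pow hij v ((le_totalDegree hd).trans hq), mul_ite, mul_one, mul_zero],
    sum_ite_eq' q.support]
  split_ifs with h
  · rfl
  · exact (notMem_support_iff.1 h).symm

end MixedDifference

theorem MvPolynomial.coeff_mul_eq_zero_of_coeff_eq_zero {σ R : Type*} [CommSemiring R]
    {p q : MvPolynomial σ R} {m : σ →₀ ℕ} {b : σ} (hb : m b ≠ 0)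
    (hp : ∀ d ≤ m, d b ≠ 0 → coeff d p = 0) (hq : ∀ d ≤ m, d b ≠ 0 → coeff d q = 0) :
    coeff m (p * q) = 0 := by
  classical
  rw [coeff_mul]
  refine sum_eq_zero fun x hx => ?_
  rw [HasAntidiagonal.mem_antidiagonal] at hx
  have hsum : x.1 b + x.2 b = m b := by rw [← hx]; rfl
  by_cases h1 : x.1 b = 0
  · rw [hq x.2 (hx ▸ le_add_self) (by omega), mul_zero]
  · rw [hp x.1 (hx ▸ le_self_add) h1, zero_mul]

theorem MvPolynomial.eval_eq_zero_of_eval_sum_sq_add_sum_eq_zero {σ ι κ : Type*} [Fintype ι]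
    [Fintype κ]
    {q : ι → MvPolynomial σ ℝ} {h : κ → MvPolynomial σ ℝ} {x : σ → ℝ}
    (hh : ∀ j, 0 ≤ eval x (h j)) (hx : eval x (∑ i, q i ^ 2 + ∑ j, h j) = 0) :
    (∀ i, eval x (q i) = 0) ∧ ∀ j, eval x (h j) = 0 := by
  simp only [map_add, map_sum, map_pow] at hx
  have hsq : ∀ i ∈ univ, 0 ≤ eval x (q i) ^ 2 := fun i _ => sq_nonneg _
  obtain ⟨hq0, hh0⟩ :=
    (add_eq_zero_iff_of_nonneg (sum_nonneg hsq) (sum_nonneg fun j _ => hh j)).1 hx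
  exact ⟨fun i => pow_eq_zero_iff two_ne_zero |>.1 <|
      (sum_eq_zero_iff_of_nonneg hsq).1 hq0 i (mem_univ i),
    fun j => (sum_eq_zero_iff_of_nonneg fun j _ => hh j).1 hh0 j (mem_univ j)⟩

theorem MvPolynomial.prod_pow_eq_zero_of_eval_eq_zero {σ : Type*} [Fintype σ] [DecidableEq σ]
    {h : MvPolynomial σ ℝ} {β : σ →₀ ℕ} {S : Finset (σ →₀ ℕ)} (hS : h.support = insert β S)
    (hpos : ∀ α ∈ S, 0 < coeff α h)
    {u : σ → ℝ} (hu : ∀ i, 0 ≤ u i) (huβ : ∏ i, u i ^ β i = 0) (h0 : eval u h = 0) :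
    ∀ α ∈ S, ∏ i, u i ^ α i = 0 := by
  have hterm : ∀ α ∈ h.support, 0 ≤ coeff α h * ∏ i, u i ^ α i := by
    intro α hα
    rw [hS, mem_insert] at hα
    rcases hα with rfl | hα
    · rw [huβ, mul_zero]
    · exact mul_nonneg (hpos α hα).le (prod_nonneg fun i _ => pow_nonneg (hu i) _)
  intro α hα
  rw [eval_eq'] at h0
  have := (sum_eq_zero_iff_of_nonneg hterm).1 h0 α (hS ▸ mem_insert_of_mem hα)
  exact (mul_eq_zero.1 this).resolve_left (hpos α hα).ne'

theorem prod_update_one_zero_pow_eq_zero_iff {σ M₀ : Type*} [Fintype σ] [DecidableEq σ]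
    [CommMonoidWithZero M₀] [NoZeroDivisors M₀] [Nontrivial M₀] (i : σ) (α : σ →₀ ℕ) :
    ∏ k, Function.update (1 : σ → M₀) i 0 k ^ α k = 0 ↔ α i ≠ 0 := by
  simp [Function.update_apply]

namespace IsNonnegCircuit

variable {n d : ℕ} {h : MvPolynomial (Fin n) ℝ} {β : Fin n →₀ ℕ}

theorem support_eq_insert (hc : IsNonnegCircuit d h) (hβ : β ∈ h.support)
    (hodd : ∃ i, Odd (β i)) :
    ∃ S : Finset (Fin n →₀ ℕ), S.Nonempty ∧ h.support = insert β S ∧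
      ∀ α ∈ S, (∀ i, Even (α i)) ∧ 0 < coeff α h := by
  obtain ⟨-, -, S, hS, -, hsupp⟩ := hc
  have hβS : β ∉ S := fun hβS => by
    obtain ⟨i, hi⟩ := hodd
    exact Nat.not_even_iff_odd.2 hi ((hS β hβS).1 i)
  rcases hsupp with hsupp | ⟨β', -, hsupp, hint⟩
  · exact absurd (hsupp ▸ hβ : β ∈ (S : Set _)) hβS
  have hβ' : β = β' := by
    have : β ∈ insert β' (S : Set _) := hsupp ▸ hβ
    exact this.resolve_right hβS
  subst hβ'
  refine ⟨S, ?_, by exact_mod_cast hsupp, hS⟩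
  rw [nonempty_iff_ne_empty]
  rintro rfl
  simp at hint

theorem coeff_eq_zero_of_eval_update_eq_zero (hc : IsNonnegCircuit d h) (hodd : ∃ i, Odd (β i))
    {I : Finset (Fin n)} (hI : d < 2 * #I) (hβI : ∀ i ∈ I, β i ≠ 0)
    (hzero : ∀ i ∈ I, eval (Function.update 1 i 0) h = 0) : coeff β h = 0 := by
  by_contra hne
  obtain ⟨S, ⟨α, hα⟩, hsupp, hS⟩ := hc.support_eq_insert (mem_support_iff.2 hne) hodd
  have hαI : ∀ i ∈ I, 2 ≤ α i := fun i hi => by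
    have hαi : α i ≠ 0 := (prod_update_one_zero_pow_eq_zero_iff i α).1 <|
      prod_pow_eq_zero_of_eval_eq_zero hsupp (fun α hα => (hS α hα).2)
        (fun k => by by_cases hk : k = i <;> simp [hk])
        ((prod_update_one_zero_pow_eq_zero_iff i β).2 (hβI i hi)) (hzero i hi) α hα
    obtain ⟨r, hr⟩ := (hS α hα).1 i
    omega
  have hdeg : α.degree = d := by
    rw [Finsupp.degree_eq_weight_one]
    exact hc.1 (hS α hα).2.ne'
  have : 2 * #I ≤ d := calc
    2 * #I = ∑ i ∈ I, 2 := by rw [sum_const, smul_eq_mul, mul_comm]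
    _ ≤ ∑ i ∈ I, α i := sum_le_sum hαI
    _ ≤ ∑ i, α i := sum_le_univ_sum_of_nonneg fun _ => Nat.zero_le _
    _ = d := by rw [← Finsupp.degree_eq_sum, hdeg]
  omega

end IsNonnegCircuit

theorem coeff_Robinson2 :
    coeff (Finsupp.single 0 2 + Finsupp.single 1 1 + Finsupp.single 2 1) Robinson2 = 2 := by
  rw [Robinson2]
  ring_nf
  simp only [X_pow_eq_monomial]
  simp only [X, monomial_mul, mul_one, ← map_ofNat (C : ℝ →+* MvPolynomial (Fin 4) ℝ),
    mul_comm _ (C _), coeff_C_mul, coeff_add, coeff_sub, coeff_neg, coeff_monomial]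
  simp [Finsupp.ext_iff, Fin.forall_fin_succ]

theorem coeff_sq_eq_zero_of_zeros_Robinson2 {q : MvPolynomial (Fin 4) ℝ} (hq : q.IsHomogeneous 2)
    (hzero : ∀ p, eval p Robinson2 = 0 → eval p q = 0) :
    coeff (Finsupp.single 0 2 + Finsupp.single 1 1 + Finsupp.single 2 1) (q ^ 2) = 0 := by
  have h01 : coeff (Finsupp.single 0 1 + Finsupp.single 1 1) q = 0 := by
    rw [← mixedDiff_eval_eq_coeff hq.totalDegree_le (by decide) (Pi.single 3 1)]
    simp [hzero, Robinson2]
  have h12 : coeff (Finsupp.single 1 1 + Finsupp.single 2 1) q = 0 := by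
    rw [← mixedDiff_eval_eq_coeff hq.totalDegree_le (by decide) (Pi.single 3 1)]
    simp [hzero, Robinson2]
  have hcoeff : ∀ d ≤ Finsupp.single 0 2 + Finsupp.single 1 1 + Finsupp.single 2 1,
      d 1 ≠ 0 → coeff d q = 0 := by
    intro d hd hd1
    by_cases hdeg : d.degree = 2
    -- a quadratic monomial dividing `x²yz` and divisible by `y` is `xy` or `yz`
    · have h0 := hd 0; have h1 := hd 1; have h2 := hd 2; have h3 := hd 3
      simp only [Finsupp.coe_add, Pi.add_apply, Finsupp.single_apply, Fin.reduceEq, ↓reduceIte]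
        at h0 h1 h2 h3
      rw [Finsupp.degree_eq_sum, Fin.sum_univ_four] at hdeg
      rw [← Finsupp.univ_sum_single d, Fin.sum_univ_four, show d 1 = 1 by omega,
        show d 3 = 0 by omega]
      obtain ⟨h0, h2⟩ | ⟨h0, h2⟩ : d 0 = 1 ∧ d 2 = 0 ∨ d 0 = 0 ∧ d 2 = 1 := by omega
      · simpa [h0, h2] using h01
      · simpa [h0, h2] using h12
    · exact hq.coeff_eq_zero hdeg
  rw [sq]
  exact coeff_mul_eq_zero_of_coeff_eq_zero (b := 1) (by simp) hcoeff hcoeff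

theorem IsNonnegCircuit.coeff_eq_zero_of_zeros_Robinson2 {h : MvPolynomial (Fin 4) ℝ}
    (hc : IsNonnegCircuit 4 h) (hzero : ∀ p, eval p Robinson2 = 0 → eval p h = 0) :
    coeff (Finsupp.single 0 2 + Finsupp.single 1 1 + Finsupp.single 2 1) h = 0 := by
  refine hc.coeff_eq_zero_of_eval_update_eq_zero (I := {0, 1, 2}) ⟨1, by simp⟩ (by decide)
    (by simp) fun i hi => hzero _ ?_
  simp only [mem_insert, mem_singleton] at hi
  rcases hi with rfl | rfl | rfl <;> simp [Robinson2]

/-- The second Robinson form is not in `Σ_{4,4} + C_{4,4}`, the Minkowski sum of the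
SOS cone and the SONC cone of quaternary quartics. -/
theorem robinson2_not_sos_plus_sonc :
    ¬ ∃ g c : MvPolynomial (Fin 4) ℝ, IsSOSForm 2 g ∧ IsSONC 4 c ∧ Robinson2 = g + c := by
  rintro ⟨-, -, ⟨k, q, hq, rfl⟩, ⟨m, h, hh, rfl⟩, hR⟩
  have hzero (p) (hp : eval p Robinson2 = 0) :
      (∀ i, eval p (q i) = 0) ∧ ∀ j, eval p (h j) = 0 :=
    eval_eq_zero_of_eval_sum_sq_add_sum_eq_zero (fun j => (hh j).2.1 p) (hR ▸ hp)
  have hcoeff := coeff_Robinson2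
  rw [hR, coeff_add, coeff_sum, coeff_sum,
    sum_eq_zero fun i _ => coeff_sq_eq_zero_of_zeros_Robinson2 (hq i) fun p hp => (hzero p hp).1 i,
    sum_eq_zero fun j _ => (hh j).coeff_eq_zero_of_zeros_Robinson2 fun p hp => (hzero p hp).2 j]
    at hcoeff
  norm_num at hcoeff
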